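/- arXiv:math-ph/0309052 — 2 statements merged into one kernel-verified Lean document; each statement's English description precedes it below -/
import Mathlib

section
/- Let Y := −iH − ½∑_{j=1}^m L_j*L_j, where H := −Δ/2 + |x|²/2 − iμ[x,∇]₊ with μ ∈ ℝ and [x,∇]₊ := 2x·∇ + d, and L_j := α_j·x + β_j·∇ + γ_j with α_j, β_j ∈ ℂ^d, γ_j ∈ ℂ. Then for every f ∈ L²(ℝ^d) whose real and imaginary parts are smooth and compactly supported, Re⟨Yf, f⟩ = −½ ∑_{j=1}^m ‖L_j f‖₂² ≤ 0; in particular Y is dissipative on this domain. -/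
open MeasureTheory
open scoped ENNReal

noncomputable section

/-- `ℝ^d` with the Euclidean norm. -/
abbrev Xs (d : ℕ) := EuclideanSpace ℝ (Fin d)

/-- The partial derivative `∂ₖ` of a complex-valued function. -/
def pd {d : ℕ} (k : Fin d) (f : Xs d → ℂ) : Xs d → ℂ :=
  fun x => fderiv ℝ f x (EuclideanSpace.single k 1)

/-- A test function: its real and imaginary parts are smooth and compactly supported. -/
def IsTest {d : ℕ} (f : Xs d → ℂ) : Prop :=
  ContDiff ℝ (⊤ : ℕ∞) f ∧ HasCompactSupport f

/-- The Lindblad operator `L = α·x + β·∇ + γ`. -/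
def Lop {d : ℕ} (α β : Fin d → ℂ) (γ : ℂ) (f : Xs d → ℂ) : Xs d → ℂ := fun x =>
  (∑ k, α k * (x k * f x)) + (∑ k, β k * pd k f x) + γ * f x

/-- The formal adjoint `L* = ᾱ·x - β̄·∇ + γ̄`. -/
def LopStar {d : ℕ} (α β : Fin d → ℂ) (γ : ℂ) (f : Xs d → ℂ) : Xs d → ℂ := fun x =>
  (∑ k, star (α k) * (x k * f x)) - (∑ k, star (β k) * pd k f x) + star γ * f x

/-- The (adjusted) Hamiltonian `H = -Δ/2 + |x|²/2 - iμ[x,∇]₊` with `[x,∇]₊ = 2x·∇ + d`. -/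
def Hop {d : ℕ} (μ : ℝ) (f : Xs d → ℂ) : Xs d → ℂ := fun x =>
  -(1 / 2 : ℂ) * (∑ k, pd k (pd k f) x) + ((‖x‖ ^ 2 / 2 : ℝ) : ℂ) * f x
    - Complex.I * (μ : ℂ) * ((2 : ℂ) * (∑ k, (x k : ℂ) * pd k f x) + (d : ℂ) * f x)

/-- The operator `Y = -iH - ½ ∑ⱼ Lⱼ*Lⱼ`. -/
def Yop {d m : ℕ} (μ : ℝ) (α β : Fin m → Fin d → ℂ) (γ : Fin m → ℂ)
    (f : Xs d → ℂ) : Xs d → ℂ := fun x =>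
  -Complex.I * Hop μ f x
    - (1 / 2 : ℂ) * ∑ j, LopStar (α j) (β j) (γ j) (Lop (α j) (β j) (γ j) f) x

/-!
Everything reduces to `∫ ∂ₖG = 0` for a test function `G`. For test functions `f` and `g`, the
integrands `conj (L* g) · f - conj g · L f` and `conj (H f) · g - conj f · H g` are divergences
`∑ₖ ∂ₖ Gₖ`, so `L*` is the formal adjoint of `L` and `H` is formally symmetric. Hence
`⟨Y f, f⟩ = i ⟨H f, f⟩ - ½ ∑ⱼ ‖Lⱼ f‖²` with `⟨H f, f⟩` real.
-/

variable {d : ℕ} {f g : Xs d → ℂ} {k : Fin d} {x : Xs d}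

lemma pd_add (hf : DifferentiableAt ℝ f x) (hg : DifferentiableAt ℝ g x) :
    pd k (fun y => f y + g y) x = pd k f x + pd k g x := by
  simp [pd, fderiv_fun_add hf hg]

lemma pd_sub (hf : DifferentiableAt ℝ f x) (hg : DifferentiableAt ℝ g x) :
    pd k (fun y => f y - g y) x = pd k f x - pd k g x := by
  simp [pd, fderiv_fun_sub hf hg]

lemma pd_const_mul (hf : DifferentiableAt ℝ f x) (c : ℂ) :
    pd k (fun y => c * f y) x = c * pd k f x := by
  simp [pd, fderiv_const_mul hf]

lemma pd_mul (hf : DifferentiableAt ℝ f x) (hg : DifferentiableAt ℝ g x) :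
    pd k (fun y => f y * g y) x = pd k f x * g x + f x * pd k g x := by
  simp [pd, fderiv_fun_mul hf hg]
  ring

lemma pd_star : pd k (fun y => star (f y)) x = star (pd k f x) := by
  rw [pd, fderiv_star]
  rfl

lemma pd_star_mul (hf : DifferentiableAt ℝ f x) (hg : DifferentiableAt ℝ g x) :
    pd k (fun y => star (f y) * g y) x = star (pd k f x) * g x + star (f x) * pd k g x := by
  rw [pd_mul hf.star hg, pd_star]

lemma pd_coord : pd k (fun y : Xs d => (y k : ℂ)) x = 1 := by
  have h : HasFDerivAt (fun y : Xs d => (y k : ℂ))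
      (Complex.ofRealCLM.comp (EuclideanSpace.proj k)) x :=
    (Complex.ofRealCLM.comp (EuclideanSpace.proj k)).hasFDerivAt
  simp [pd, h.fderiv]

lemma ContDiff.pd (hf : ContDiff ℝ (⊤ : ℕ∞) f) (k : Fin d) : ContDiff ℝ (⊤ : ℕ∞) (pd k f) :=
  (hf.fderiv_right (by exact_mod_cast le_top)).clm_apply contDiff_const

lemma HasCompactSupport.pd (hf : HasCompactSupport f) (k : Fin d) : HasCompactSupport (pd k f) :=
  (hf.fderiv ℝ).comp_left (g := fun L : Xs d →L[ℝ] ℂ => L (EuclideanSpace.single k 1)) rfl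

namespace IsTest

lemma differentiable (hf : IsTest f) : Differentiable ℝ f :=
  hf.1.differentiable (by simp)

lemma integrable (hf : IsTest f) : Integrable f :=
  hf.1.continuous.integrable_of_hasCompactSupport hf.2

lemma zero : IsTest (0 : Xs d → ℂ) := ⟨contDiff_const, HasCompactSupport.zero⟩

lemma add (hf : IsTest f) (hg : IsTest g) : IsTest (fun x => f x + g x) :=
  ⟨hf.1.add hg.1, hf.2.add hg.2⟩

lemma sub (hf : IsTest f) (hg : IsTest g) : IsTest (fun x => f x - g x) :=
  ⟨hf.1.sub hg.1, hf.2.sub hg.2⟩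

lemma sum {ι : Type*} {s : Finset ι} {f : ι → Xs d → ℂ} (hf : ∀ i ∈ s, IsTest (f i)) :
    IsTest (fun x => ∑ i ∈ s, f i x) := by
  rw [← Finset.sum_fn]
  exact Finset.sum_induction _ IsTest (fun _ _ => add) zero hf

lemma smooth_mul (hg : ContDiff ℝ (⊤ : ℕ∞) g) (hf : IsTest f) : IsTest (fun x => g x * f x) :=
  ⟨hg.mul hf.1, hf.2.mul_left⟩

lemma const_mul (c : ℂ) (hf : IsTest f) : IsTest (fun x => c * f x) :=
  smooth_mul contDiff_const hf

lemma coord_mul (k : Fin d) (hf : IsTest f) : IsTest (fun x => (x k : ℂ) * f x) :=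
  smooth_mul (Complex.ofRealCLM.comp (EuclideanSpace.proj k)).contDiff hf

lemma star_mul (hf : IsTest f) (hg : IsTest g) : IsTest (fun x => star (f x) * g x) :=
  smooth_mul ((starL' ℝ : ℂ ≃L[ℝ] ℂ).contDiff.comp hf.1) hg

lemma pd (hf : IsTest f) (k : Fin d) : IsTest (pd k f) := ⟨hf.1.pd k, hf.2.pd k⟩

lemma lop (α β : Fin d → ℂ) (γ : ℂ) (hf : IsTest f) : IsTest (Lop α β γ f) :=
  ((sum fun k _ => (hf.coord_mul k).const_mul _).add
    (sum fun k _ => (hf.pd k).const_mul _)).add (hf.const_mul _)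

lemma lopStar (α β : Fin d → ℂ) (γ : ℂ) (hf : IsTest f) : IsTest (LopStar α β γ f) :=
  ((sum fun k _ => (hf.coord_mul k).const_mul _).sub
    (sum fun k _ => (hf.pd k).const_mul _)).add (hf.const_mul _)

lemma hop (μ : ℝ) (hf : IsTest f) : IsTest (Hop μ f) :=
  (((sum fun k _ => (hf.pd k).pd k).const_mul _).add
    (smooth_mul (Complex.ofRealCLM.contDiff.comp ((contDiff_norm_sq ℝ).div_const _)) hf)).sub
    (((sum fun k _ => (hf.pd k).coord_mul k).const_mul _).add (hf.const_mul _) |>.const_mul _)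

end IsTest

lemma integral_pd_eq_zero (hf : IsTest f) (k : Fin d) : ∫ x, pd k f x = 0 := by
  have h := integral_smul_fderiv_eq_neg_fderiv_smul_of_integrable (μ := volume)
    (f := fun _ => (1 : ℝ)) (g := f) (v := EuclideanSpace.single k 1)
    (by simp) (by simp only [one_smul]; exact (hf.pd k).integrable) (by simpa using hf.integrable)
    (fun _ _ => differentiableAt_const _) (fun x _ => hf.differentiable x)
  simpa [pd] using h

lemma integral_eq_of_sub_eq_sum_pd {A B : Xs d → ℂ} (hA : Integrable A) (hB : Integrable B)
    {G : Fin d → Xs d → ℂ} (hG : ∀ k, IsTest (G k)) (h : ∀ x, A x - B x = ∑ k, pd k (G k) x) :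
    ∫ x, A x = ∫ x, B x := by
  rw [← sub_eq_zero, ← integral_sub hA hB, funext h,
    integral_finsetSum _ fun k _ => ((hG k).pd k).integrable]
  exact Finset.sum_eq_zero fun k _ => integral_pd_eq_zero (hG k) k

theorem integral_star_lopStar_mul (α β : Fin d → ℂ) (γ : ℂ) (hf : IsTest f) (hg : IsTest g) :
    ∫ x, star (LopStar α β γ g x) * f x = ∫ x, star (g x) * Lop α β γ f x := by
  refine integral_eq_of_sub_eq_sum_pd ((hg.lopStar α β γ).star_mul hf).integrable
    (hg.star_mul (hf.lop α β γ)).integrable (G := fun k y => -β k * (star (g y) * f y))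
    (fun k => (hg.star_mul hf).const_mul _) fun x => ?_
  have hfd := hf.differentiable
  have hgd := hg.differentiable
  have hG (k : Fin d) : pd k (fun y => -β k * (star (g y) * f y)) x
      = -β k * (star (pd k g x) * f x + star (g x) * pd k f x) := by
    rw [pd_const_mul, pd_star_mul] <;> fun_prop
  simp only [hG]
  simp only [LopStar, Lop, star_add, star_sub, star_sum, star_mul', Complex.star_def,
    Complex.conj_ofReal, Complex.conj_conj, Finset.mul_sum, Finset.sum_mul, mul_add, add_mul,
    sub_mul, neg_mul, Finset.sum_add_distrib, Finset.sum_neg_distrib]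
  -- AC-normalise the summands so that `ring` sees equal sums as equal atoms
  simp only [mul_comm, mul_assoc, mul_left_comm]
  ring

theorem integral_star_hop_mul (μ : ℝ) (hf : IsTest f) (hg : IsTest g) :
    ∫ x, star (Hop μ f x) * g x = ∫ x, star (f x) * Hop μ g x := by
  -- the dilation part of `Gₖ` produces `∂ₖ xₖ = 1`, which sums to the `d` in `[x,∇]₊ = 2x·∇ + d`
  let G (k : Fin d) (y : Xs d) : ℂ := -(1 / 2) * (star (pd k f y) * g y - star (f y) * pd k g y)
    + 2 * Complex.I * μ * ((y k : ℂ) * (star (f y) * g y))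
  refine integral_eq_of_sub_eq_sum_pd ((hf.hop μ).star_mul hg).integrable
    (hf.star_mul (hg.hop μ)).integrable (G := G) (fun k => ?_) fun x => ?_
  · exact (((hf.pd k).star_mul hg).sub (hf.star_mul (hg.pd k))).const_mul _ |>.add
      (((hf.star_mul hg).coord_mul k).const_mul _)
  have hfd := hf.differentiable
  have hgd := hg.differentiable
  have hfd' (k : Fin d) := (hf.pd k).differentiable
  have hgd' (k : Fin d) := (hg.pd k).differentiable
  have hcoord (k : Fin d) : Differentiable ℝ (fun y : Xs d => (y k : ℂ)) :=
    (Complex.ofRealCLM.comp (EuclideanSpace.proj k)).differentiable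
  have hG (k : Fin d) : pd k (G k) x
      = -(1 / 2) * (star (pd k (pd k f) x) * g x - star (f x) * pd k (pd k g) x)
        + 2 * Complex.I * μ * (star (f x) * g x
          + (x k : ℂ) * (star (pd k f x) * g x + star (f x) * pd k g x)) := by
    rw [pd_add, pd_const_mul, pd_const_mul, pd_sub, pd_star_mul, pd_star_mul, pd_mul, pd_coord,
      pd_star_mul]
    · ring
    all_goals fun_prop
  simp only [hG]
  simp only [Hop, star_add, star_sub, star_neg, star_sum, star_mul', Complex.star_def,
    Complex.conj_ofReal, Complex.conj_I, map_ofNat, map_one, map_div₀, map_natCast,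
    Finset.mul_sum, Finset.sum_mul, mul_add, add_mul, sub_mul, mul_sub, neg_mul, mul_neg,
    Finset.sum_add_distrib, Finset.sum_sub_distrib, Finset.sum_neg_distrib, Finset.sum_const,
    Finset.card_univ, Fintype.card_fin, nsmul_eq_mul]
  simp only [mul_comm, mul_assoc, mul_left_comm]
  ring

lemma integral_star_mul_self (f : Xs d → ℂ) :
    ∫ x, star (f x) * f x = ((∫ x, ‖f x‖ ^ 2 : ℝ) : ℂ) := by
  simp_rw [Complex.star_def, Complex.conj_mul']
  exact_mod_cast integral_ofReal (𝕜 := ℂ)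

lemma im_integral_star_hop_mul_self (μ : ℝ) (hf : IsTest f) :
    (∫ x, star (Hop μ f x) * f x).im = 0 := by
  rw [← Complex.conj_eq_iff_im, ← integral_conj, integral_star_hop_mul μ hf hf]
  simp [mul_comm]

lemma integral_star_yop_mul {m : ℕ} (μ : ℝ) (α β : Fin m → Fin d → ℂ) (γ : Fin m → ℂ)
    (hf : IsTest f) :
    ∫ x, star (Yop μ α β γ f x) * f x = Complex.I * (∫ x, star (Hop μ f x) * f x)
      - (1 / 2) * ∑ j, ∫ x, ‖Lop (α j) (β j) (γ j) f x‖ ^ 2 := by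
  have hL (j : Fin m) := hf.lop (α j) (β j) (γ j)
  have h (x : Xs d) : star (Yop μ α β γ f x) * f x = Complex.I * (star (Hop μ f x) * f x)
      - (1 / 2) * ∑ j, star (LopStar (α j) (β j) (γ j) (Lop (α j) (β j) (γ j) f) x) * f x := by
    simp only [Yop, star_sub, star_mul', star_neg, star_sum, Complex.star_def, Complex.conj_I,
      map_div₀, map_one, map_ofNat, sub_mul, Finset.mul_sum, Finset.sum_mul]
    simp only [mul_comm, mul_left_comm]
    ring
  simp_rw [h]
  rw [integral_sub, integral_const_mul, integral_const_mul, integral_finsetSum]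
  · simp_rw [integral_star_lopStar_mul _ _ _ hf (hL _), integral_star_mul_self]
    rw [Complex.ofReal_sum]
  · exact fun j _ => ((hL j).lopStar _ _ _ |>.star_mul hf).integrable
  · exact ((hf.hop μ).star_mul hf).integrable.const_mul _
  · exact (IsTest.sum fun j _ => (hL j).lopStar _ _ _ |>.star_mul hf).integrable.const_mul _

/-- For every `f ∈ L²(ℝ^d)` whose real and imaginary parts are smooth and
compactly supported, `Re⟨Yf, f⟩ = -½ ∑ⱼ ‖Lⱼ f‖₂² ≤ 0`; in particular `Y` is dissipative on
this domain. -/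
theorem stmt2 {d m : ℕ} (μ : ℝ) (α β : Fin m → Fin d → ℂ) (γ : Fin m → ℂ)
    (f : Xs d → ℂ) (hf : IsTest f) :
    (∫ x, star (Yop μ α β γ f x) * f x).re
        = -(1 / 2) * ∑ j, ∫ x, ‖Lop (α j) (β j) (γ j) f x‖ ^ 2 ∧
    (∫ x, star (Yop μ α β γ f x) * f x).re ≤ 0 := by
  have hre : (∫ x, star (Yop μ α β γ f x) * f x).re
      = -(1 / 2) * ∑ j, ∫ x, ‖Lop (α j) (β j) (γ j) f x‖ ^ 2 := by
    rw [integral_star_yop_mul μ α β γ hf, Complex.sub_re, Complex.mul_re, Complex.I_re,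
      Complex.I_im, im_integral_star_hop_mul_self μ hf]
    simp
  refine ⟨hre, hre ▸ ?_⟩
  have hnorm : 0 ≤ ∑ j, ∫ x, ‖Lop (α j) (β j) (γ j) f x‖ ^ 2 :=
    Finset.sum_nonneg fun j _ => integral_nonneg fun x => by positivity
  linarith
end
end

section
/- Let φ : ℝ³ → ℝ be a Schwartz function. Then for all indices k, l ∈ {1,2,3} the identity 2 ∫_{ℝ³} x_k (∂_l φ)(x) (−Δφ)(x) dx = 2 ∫_{ℝ³} (∂_k φ)(x)(∂_l φ)(x) dx − δ_{kl} ∫_{ℝ³} |∇φ(x)|² dx holds, where δ_{kl} is the Kronecker delta. In particular, if −Δφ = n, then 2∫ x_k ∂_lφ · n dx = 2∫ ∂_kφ ∂_lφ dx − δ_{kl}∫|∇φ|² dx. -/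
/-!
Integrate by parts twice. Moving `∂ₘ` off `∂ₘ∂ₗφ` onto `xₖ ∂ₗφ` produces `δₖₘ ∂ₗφ ∂ₘφ` and
`xₖ ∂ₘ∂ₗφ ∂ₘφ = xₖ ∂ₗ(∂ₘφ) ∂ₘφ`; integrating the latter by parts in the direction `l` returns
the same integral together with `δₖₗ (∂ₘφ)²`, so it equals `-½ δₖₗ ∫ (∂ₘφ)²`. Summing over `m`
gives the identity.
-/

open MeasureTheory
open scoped ENNReal NNReal

noncomputable section

/-- `ℝ³` with the Euclidean norm. -/
abbrev X3 := EuclideanSpace ℝ (Fin 3)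

/-- The Hartree (Newtonian) potential `φ[n](x) = (1/4π) ∫ n(y)/|x-y| dy`. -/
def hartree (n : X3 → ℝ) : X3 → ℝ :=
  fun x => (1 / (4 * Real.pi)) * ∫ y, n y / ‖x - y‖

/-- The (formula for the) gradient of the Hartree potential,
`∇φ[n](x) = (1/4π) ∫ (x-y)/|x-y|³ · n(y) dy`. -/
def hartreeGrad (n : X3 → ℝ) : X3 → X3 :=
  fun x => (1 / (4 * Real.pi)) • ∫ y, (n y / ‖x - y‖ ^ 3) • (x - y)

/-- The partial derivative `∂ₖ` of a real-valued function on `ℝ³`. -/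
def pdR (k : Fin 3) (g : X3 → ℝ) : X3 → ℝ :=
  fun x => fderiv ℝ g x (EuclideanSpace.single k 1)

/-- A real-valued test function: smooth with compact support. -/
def IsTestR (g : X3 → ℝ) : Prop :=
  ContDiff ℝ (⊤ : ℕ∞) g ∧ HasCompactSupport g

/-- The Laplacian of a real-valued function on `ℝ³`. -/
def lapR (g : X3 → ℝ) : X3 → ℝ := fun x => ∑ k, pdR k (pdR k g) x

open SchwartzMap LineDeriv Laplacian

namespace SchwartzMap

section LineDeriv

variable {D F : Type*} [NormedAddCommGroup D] [NormedSpace ℝ D]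
  [NormedAddCommGroup F] [NormedSpace ℝ F]

theorem lineDerivOp_comm (f : 𝓢(D, F)) (v w : D) : ∂_{v} (∂_{w} f) = ∂_{w} (∂_{v} f) := by
  ext x
  have hdiff : DifferentiableAt ℝ (fderiv ℝ f) x :=
    ((f.smooth 2).fderiv_right (m := 1) (by norm_num)).differentiable one_ne_zero x
  have hsecond (v w : D) : ∂_{v} (∂_{w} f) x = fderiv ℝ (fderiv ℝ f) x v w := by
    simp only [lineDerivOp_apply_eq_fderiv]
    change fderiv ℝ (fun y => fderiv ℝ f y w) x v = _
    rw [fderiv_clm_apply hdiff (differentiableAt_const w)]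
    simp
  rw [hsecond, hsecond]
  exact (f.smooth 2).contDiffAt.isSymmSndFDerivAt (by simp) v w

theorem lineDerivOp_smulLeftCLM (L : D →L[ℝ] ℝ) (f : 𝓢(D, F)) (v : D) :
    ∂_{v} (smulLeftCLM F L f) = L v • f + smulLeftCLM F L (∂_{v} f) := by
  ext x
  simp only [lineDerivOp_apply_eq_fderiv, add_apply, smul_apply,
    smulLeftCLM_apply_apply L.hasTemperateGrowth]
  rw [smulLeftCLM_apply L.hasTemperateGrowth, fderiv_fun_smul L.differentiableAt f.differentiableAt]
  simp [L.fderiv, add_comm]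

end LineDeriv

section IntegrationByParts

variable {D : Type*} [NormedAddCommGroup D] [NormedSpace ℝ D] [FiniteDimensional ℝ D]
  [MeasurableSpace D] [BorelSpace D] {μ : Measure D} [μ.IsAddHaarMeasure]

theorem integrable_mul (f g : 𝓢(D, ℝ)) : Integrable (fun x => f x * g x) μ :=
  (pairing (ContinuousLinearMap.mul ℝ ℝ) f g).integrable

theorem integrable_clm_mul_mul (L : D →L[ℝ] ℝ) (f g : 𝓢(D, ℝ)) :
    Integrable (fun x => L x * f x * g x) μ := by
  simpa [smulLeftCLM_apply_apply L.hasTemperateGrowth] using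
    integrable_mul (μ := μ) (smulLeftCLM ℝ L f) g

theorem integral_clm_mul_mul_lineDerivOp (L : D →L[ℝ] ℝ) (f g : 𝓢(D, ℝ)) (v : D) :
    ∫ x, L x * f x * ∂_{v} g x ∂μ =
      -(L v * ∫ x, f x * g x ∂μ) - ∫ x, L x * ∂_{v} f x * g x ∂μ := by
  have h := integral_mul_lineDerivOp_right_eq_neg_left (μ := μ) (smulLeftCLM ℝ L f) g v
  rw [lineDerivOp_smulLeftCLM] at h
  simp only [add_apply, add_mul] at h
  rw [integral_add (integrable_mul _ _) (integrable_mul _ _)] at h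
  simp only [smulLeftCLM_apply_apply L.hasTemperateGrowth, smul_apply, smul_eq_mul, mul_assoc,
    integral_const_mul] at h
  simpa only [mul_assoc, neg_add, ← sub_eq_add_neg] using h

theorem integral_clm_mul_lineDerivOp_mul_self (L : D →L[ℝ] ℝ) (g : 𝓢(D, ℝ)) (v : D) :
    ∫ x, L x * ∂_{v} g x * g x ∂μ = -(L v / 2 * ∫ x, g x * g x ∂μ) := by
  have h := integral_clm_mul_mul_lineDerivOp (μ := μ) L g g v
  simp only [mul_right_comm _ (g _)] at h
  linarith

theorem integral_clm_mul_lineDerivOp_mul_lineDerivOp_lineDerivOp (L : D →L[ℝ] ℝ)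
    (φ : 𝓢(D, ℝ)) (v w : D) :
    ∫ x, L x * ∂_{w} φ x * ∂_{v} (∂_{v} φ) x ∂μ =
      -(L v * ∫ x, ∂_{v} φ x * ∂_{w} φ x ∂μ) + L w / 2 * ∫ x, ∂_{v} φ x * ∂_{v} φ x ∂μ := by
  rw [integral_clm_mul_mul_lineDerivOp, lineDerivOp_comm, integral_clm_mul_lineDerivOp_mul_self]
  simp only [mul_comm ((∂_{w} φ) _)]
  ring

end IntegrationByParts

section Laplacian

variable {E : Type*} [NormedAddCommGroup E] [InnerProductSpace ℝ E]

theorem lineDerivOp_eq_sum_inner {F ι : Type*} [NormedAddCommGroup F] [NormedSpace ℝ F]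
    [Fintype ι] (b : OrthonormalBasis ι ℝ E) (φ : 𝓢(E, F)) (u : E) :
    ∂_{u} φ = ∑ i, inner ℝ u (b i) • ∂_{b i} φ := by
  conv_lhs => rw [← b.sum_repr' u]
  simp [lineDerivOp_left_smul, real_inner_comm]

variable [FiniteDimensional ℝ E] [MeasurableSpace E] [BorelSpace E]
  {μ : Measure E} [μ.IsAddHaarMeasure]

theorem integral_inner_mul_lineDerivOp_mul_laplacian {ι : Type*} [Fintype ι]
    (b : OrthonormalBasis ι ℝ E) (φ : 𝓢(E, ℝ)) (u w : E) :
    ∫ x, inner ℝ u x * ∂_{w} φ x * Δ φ x ∂μ =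
      -∫ x, ∂_{u} φ x * ∂_{w} φ x ∂μ + inner ℝ u w / 2 * ∫ x, ∑ i, ∂_{b i} φ x ^ 2 ∂μ := by
  have hinner (x : E) : inner ℝ u x = innerSL ℝ u x := rfl
  rw [laplacian_eq_sum b]
  simp only [sum_apply, Finset.mul_sum, hinner]
  rw [integral_finsetSum _ fun i _ => integrable_clm_mul_mul _ _ _]
  simp only [integral_clm_mul_lineDerivOp_mul_lineDerivOp_lineDerivOp, Finset.sum_add_distrib]
  rw [lineDerivOp_eq_sum_inner b φ u]
  simp only [sum_apply, smul_apply, smul_eq_mul, Finset.sum_mul, pow_two, mul_assoc]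
  rw [integral_finsetSum _ fun i _ => integrable_mul _ _,
    integral_finsetSum _ fun i _ => (integrable_mul _ _).const_mul _, Finset.mul_sum]
  simp only [integral_const_mul, innerSL_apply_apply, Finset.sum_neg_distrib]

end Laplacian

end SchwartzMap

open EuclideanSpace in
theorem pdR_eq_lineDerivOp (φ : 𝓢(X3, ℝ)) (m : Fin 3) :
    pdR m ⇑φ = ⇑(∂_{single m (1 : ℝ)} φ : 𝓢(X3, ℝ)) := rfl

theorem lapR_eq_laplacian (φ : 𝓢(X3, ℝ)) : lapR ⇑φ = ⇑(Δ φ : 𝓢(X3, ℝ)) := by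
  ext x
  simp [lapR, pdR_eq_lineDerivOp, laplacian_eq_sum (EuclideanSpace.basisFun (Fin 3) ℝ)]

/-- For every Schwartz function `φ : ℝ³ → ℝ` and all `k, l`,
`2∫ xₖ (∂ₗφ)(-Δφ) = 2∫ (∂ₖφ)(∂ₗφ) - δₖₗ ∫ |∇φ|²`; in particular, if `-Δφ = n` then
`2∫ xₖ (∂ₗφ) n = 2∫ (∂ₖφ)(∂ₗφ) - δₖₗ ∫ |∇φ|²`. -/
theorem stmt18 (φ : SchwartzMap X3 ℝ) (k l : Fin 3) :
    (2 * (∫ x : X3, x k * pdR l (⇑φ) x * -lapR (⇑φ) x) =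
      2 * (∫ x : X3, pdR k (⇑φ) x * pdR l (⇑φ) x) -
        (if k = l then (1 : ℝ) else 0) * ∫ x : X3, ∑ m, pdR m (⇑φ) x ^ 2) ∧
    ∀ n : X3 → ℝ, (∀ x, n x = -lapR (⇑φ) x) →
      2 * (∫ x : X3, x k * pdR l (⇑φ) x * n x) =
        2 * (∫ x : X3, pdR k (⇑φ) x * pdR l (⇑φ) x) -
          (if k = l then (1 : ℝ) else 0) * ∫ x : X3, ∑ m, pdR m (⇑φ) x ^ 2 := by
  have hmain : 2 * (∫ x : X3, x k * pdR l (⇑φ) x * -lapR (⇑φ) x) =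
      2 * (∫ x : X3, pdR k (⇑φ) x * pdR l (⇑φ) x) -
        (if k = l then (1 : ℝ) else 0) * ∫ x : X3, ∑ m, pdR m (⇑φ) x ^ 2 := by
    have h := integral_inner_mul_lineDerivOp_mul_laplacian (μ := volume)
      (EuclideanSpace.basisFun (Fin 3) ℝ) φ (EuclideanSpace.single k 1) (EuclideanSpace.single l 1)
    simp only [EuclideanSpace.inner_single_left, EuclideanSpace.basisFun_apply, map_one, one_mul,
      PiLp.single_apply] at h
    simp only [lapR_eq_laplacian, pdR_eq_lineDerivOp, mul_neg, integral_neg]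
    linarith
  refine ⟨hmain, fun n hn => ?_⟩
  simpa only [hn] using hmain
end
end
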